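/- (A diagonal solution of the Yang reflection equation.) Let 0 ≤ r ≤ n, a, ρ ∈ ℂ, G° = Σ_{i=r+1}^{n} e_{ii} − Σ_{i=1}^{r} e_{ii} ∈ End(ℂⁿ), and K°(u) = G° − (a/(u+ρ/2)) I. Then K° satisfies the reflection equation with the Yang R-matrix R(u) = I − P/u: namely R(u−v) K°₁(u) R(u+v+ρ) K°₂(v) = K°₂(v) R(u+v+ρ) K°₁(u) R(u−v), an identity of operators on ℂⁿ ⊗ ℂⁿ over ℂ(u,v). -/
import Mathlib


open Matrix
open scoped Kronecker

noncomputable section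

/-- permutation operator on `ℂⁿ ⊗ ℂⁿ` -/
def Pn (n : ℕ) : Matrix (Fin n × Fin n) (Fin n × Fin n) ℂ :=
  Matrix.of fun p q => if p.1 = q.2 ∧ p.2 = q.1 then 1 else 0

/-- the Yang R-matrix `R(u) = I - P/u` -/
def Ry (n : ℕ) (u : ℂ) : Matrix (Fin n × Fin n) (Fin n × Fin n) ℂ :=
  (1 : Matrix (Fin n × Fin n) (Fin n × Fin n) ℂ) - u⁻¹ • Pn n

/-- `G° = Σ_{i=r+1}^n e_{ii} - Σ_{i=1}^r e_{ii}` -/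
def Gcirc (n r : ℕ) : Matrix (Fin n) (Fin n) ℂ :=
  Matrix.of fun i j => if i = j then (if (i : ℕ) < r then -1 else 1) else 0

/-- `K°(u) = G° - (a/(u + ρ/2)) I` -/
def Kcirc (n r : ℕ) (a ρ : ℂ) (u : ℂ) : Matrix (Fin n) (Fin n) ℂ :=
  Gcirc n r - (a / (u + ρ/2)) • (1 : Matrix (Fin n) (Fin n) ℂ)

lemma Pn_mul_Pn (n : ℕ) : Pn n * Pn n = 1 := by
  ext ⟨i,j⟩ ⟨k,l⟩
  simp [Pn, mul_apply, Fintype.sum_prod_type, ite_and, one_apply, Prod.ext_iff, and_comm]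

lemma Pn_swap (n : ℕ) (A B : Matrix (Fin n) (Fin n) ℂ) :
    Pn n * (A ⊗ₖ B) = (B ⊗ₖ A) * Pn n := by
  ext ⟨i,j⟩ ⟨k,l⟩
  simp [Pn, mul_apply, Fintype.sum_prod_type, ite_and, kroneckerMap_apply, mul_comm]

lemma Gcirc_mul_Gcirc (n r : ℕ) : Gcirc n r * Gcirc n r = 1 := by
  ext i j
  by_cases h : i = j
  · subst h; simp [Gcirc, mul_apply, one_apply]; split <;> ring
  · simp [Gcirc, mul_apply, one_apply, h]

lemma aux_refl {A : Type*} [Ring A] [Algebra ℂ A] (p a b : A) (x y f g : ℂ)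
    (hpp : p*p = 1) (haa : a*a = 1) (hbb : b*b = 1)
    (hpa : p*a = b*p) (hpb : p*b = a*p) (hab : b*a = a*b)
    (hs : y*f + y*g + x*f - x*g = 0) :
    (1 - x•p) * (a - f•1) * (1 - y•p) * (b - g•1)
      = (b - g•1) * (1 - y•p) * (a - f•1) * (1 - x•p) := by
  have hpa2 : ∀ c:A, p*(a*c) = b*(p*c) := fun c => by rw [← mul_assoc, hpa, mul_assoc]
  have hpb2 : ∀ c:A, p*(b*c) = a*(p*c) := fun c => by rw [← mul_assoc, hpb, mul_assoc]
  have hpp2 : ∀ c:A, p*(p*c) = c := fun c => by rw [← mul_assoc, hpp, one_mul]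
  have haa2 : ∀ c:A, a*(a*c) = c := fun c => by rw [← mul_assoc, haa, one_mul]
  have hbb2 : ∀ c:A, b*(b*c) = c := fun c => by rw [← mul_assoc, hbb, one_mul]
  have hab2 : ∀ c:A, b*(a*c) = a*(b*c) := fun c => by rw [← mul_assoc, hab, mul_assoc]
  simp only [mul_sub, sub_mul, mul_one, one_mul, smul_mul_assoc, mul_smul_comm, mul_assoc,
    hpa, hpb, hpp, haa, hbb, hab, hpa2, hpb2, hpp2, haa2, hbb2, hab2, smul_smul]
  match_scalars
  all_goals try ring
  all_goals try linear_combination hs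
  all_goals try linear_combination -hs

theorem statement8 (n r : ℕ) (hr : r ≤ n) (a ρ : ℂ) (u v : ℂ)
    (h1 : u - v ≠ 0) (h2 : u + v + ρ ≠ 0) (h3 : u + ρ/2 ≠ 0) (h4 : v + ρ/2 ≠ 0) :
    Ry n (u - v) * (Kcirc n r a ρ u ⊗ₖ (1 : Matrix (Fin n) (Fin n) ℂ))
        * Ry n (u + v + ρ) * ((1 : Matrix (Fin n) (Fin n) ℂ) ⊗ₖ Kcirc n r a ρ v)
      = ((1 : Matrix (Fin n) (Fin n) ℂ) ⊗ₖ Kcirc n r a ρ v) * Ry n (u + v + ρ)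
        * (Kcirc n r a ρ u ⊗ₖ (1 : Matrix (Fin n) (Fin n) ℂ)) * Ry n (u - v) := by
  have hK1 : Kcirc n r a ρ u ⊗ₖ (1 : Matrix (Fin n) (Fin n) ℂ)
      = (Gcirc n r ⊗ₖ 1) - (a / (u + ρ/2)) • (1 : Matrix (Fin n × Fin n) (Fin n × Fin n) ℂ) := by
    rw [Kcirc, sub_eq_add_neg, ← neg_smul, Matrix.add_kronecker, Matrix.smul_kronecker,
      Matrix.one_kronecker_one, neg_smul, ← sub_eq_add_neg]
  have hK2 : (1 : Matrix (Fin n) (Fin n) ℂ) ⊗ₖ Kcirc n r a ρ v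
      = ((1 : Matrix (Fin n) (Fin n) ℂ) ⊗ₖ Gcirc n r)
        - (a / (v + ρ/2)) • (1 : Matrix (Fin n × Fin n) (Fin n × Fin n) ℂ) := by
    rw [Kcirc, sub_eq_add_neg, ← neg_smul, Matrix.kronecker_add, Matrix.kronecker_smul,
      Matrix.one_kronecker_one, neg_smul, ← sub_eq_add_neg]
  rw [hK1, hK2, Ry, Ry]
  apply aux_refl
  · exact Pn_mul_Pn n
  · rw [← Matrix.mul_kronecker_mul, Gcirc_mul_Gcirc, one_mul, Matrix.one_kronecker_one]
  · rw [← Matrix.mul_kronecker_mul, Gcirc_mul_Gcirc, one_mul, Matrix.one_kronecker_one]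
  · exact Pn_swap n _ _
  · exact Pn_swap n _ _
  · rw [← Matrix.mul_kronecker_mul, ← Matrix.mul_kronecker_mul, one_mul, mul_one]
  · rw [inv_eq_one_div, inv_eq_one_div, div_mul_div_comm, div_mul_div_comm, div_mul_div_comm,
      div_mul_div_comm,
      div_add_div _ _ (mul_ne_zero h2 h3) (mul_ne_zero h2 h4),
      div_add_div _ _ (mul_ne_zero (mul_ne_zero h2 h3) (mul_ne_zero h2 h4)) (mul_ne_zero h1 h3),
      div_sub_div _ _ (mul_ne_zero (mul_ne_zero (mul_ne_zero h2 h3) (mul_ne_zero h2 h4))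
        (mul_ne_zero h1 h3)) (mul_ne_zero h1 h4),
      div_eq_zero_iff]
    left; ring
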